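/- arXiv:2403.18037 — 5 statements merged into one kernel-verified Lean document; each statement's English description precedes it below -/
import Mathlib

section
/- If an infinite-dimensional Banach space X admits an inevitable biorthogonal system with constant δ for every 0 < δ < 1/2, then X is arbitrarily distortable. -/
noncomputable section

/-- A subset `A` of (the unit sphere of) `X` is inevitable: every
infinite-dimensional closed subspace of `X` comes arbitrarily close to `A`. -/
def Inevitable {X : Type*} [NormedAddCommGroup X] [NormedSpace ℂ X] (A : Set X) : Prop :=
  ∀ H : Submodule ℂ X, IsClosed (H : Set X) → ¬ FiniteDimensional ℂ H →
    ∀ ε : ℝ, 0 < ε → ∃ h ∈ H, ∃ a ∈ A, ‖h - a‖ < ε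

/-- `X` admits an inevitable biorthogonal system with constant `δ`. -/
def InevitableBiorthSystem (X : Type*) [NormedAddCommGroup X] [NormedSpace ℂ X]
    (δ : ℝ) : Prop :=
  ∃ (A : ℕ → Set X) (B : ℕ → Set (X →L[ℂ] ℂ)),
    (∀ j, A j ⊆ Metric.sphere (0 : X) 1) ∧
    (∀ j, B j ⊆ Metric.closedBall (0 : X →L[ℂ] ℂ) 1) ∧
    (∀ j, Inevitable (A j)) ∧
    (∀ j, ∀ x ∈ A j, ∃ f ∈ B j, 1 - δ ≤ (f x).re) ∧
    (∀ j k, j ≠ k → ∀ x ∈ A j, ∀ f ∈ B k, ‖f x‖ ≤ δ)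

/-- `N : X → ℝ` is a norm on the complex normed space `X`. -/
def IsNormOn {X : Type*} [NormedAddCommGroup X] [NormedSpace ℂ X] (N : X → ℝ) : Prop :=
  (∀ x, 0 ≤ N x) ∧ (∀ x, N x = 0 → x = 0) ∧
  (∀ (c : ℂ) (x : X), N (c • x) = ‖c‖ * N x) ∧
  (∀ x y, N (x + y) ≤ N x + N y)

/-- The norm of `X` is `lam`-distortable: there is an equivalent norm `N` such
that on the unit sphere of every infinite-dimensional closed subspace `Y`,
`sup N x / N y ≥ lam`. -/
def Distortable (X : Type*) [NormedAddCommGroup X] [NormedSpace ℂ X] (lam : ℝ) : Prop :=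
  ∃ N : X → ℝ, IsNormOn N ∧
    (∃ c > (0 : ℝ), ∃ C > (0 : ℝ), ∀ x, c * ‖x‖ ≤ N x ∧ N x ≤ C * ‖x‖) ∧
    ∀ Y : Submodule ℂ X, IsClosed (Y : Set X) → ¬ FiniteDimensional ℂ Y →
      lam ≤ sSup {r : ℝ | ∃ x ∈ Y, ∃ y ∈ Y, ‖x‖ = 1 ∧ ‖y‖ = 1 ∧ r = N x / N y}

/-- `X` is arbitrarily distortable. -/
def ArbitrarilyDistortable (X : Type*) [NormedAddCommGroup X] [NormedSpace ℂ X] : Prop :=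
  ∀ lam : ℝ, 1 < lam → Distortable X lam

/-!
Fix `δ` and a biorthogonal system `(Aⱼ, Bⱼ)` with constant `δ`. The equivalent norm
`‖x‖ + δ⁻¹ · sup_{f ∈ B₀} ‖f x‖` is at least `δ⁻¹` on `A₀`, which `B₀` nearly norms, but at most
`2` on `A₁`, where every functional of `B₀` is `δ`-small. Every infinite-dimensional closed
subspace contains unit vectors close to `A₀` and to `A₁`, so the new norm distorts it by a factor
of order `δ⁻¹`, which is arbitrarily large as `δ → 0`.
-/

section

open Metric

variable {X : Type*} [NormedAddCommGroup X] [NormedSpace ℂ X]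

/-- Pointwise `x ↦ ⨆ f ∈ B, ‖f x‖` only when `B` is bounded (`supNormSeminorm_apply`). -/
def supNormSeminorm (B : Set (X →L[ℂ] ℂ)) : Seminorm ℂ X :=
  ⨆ f : B, (normSeminorm ℂ ℂ).comp (f : X →L[ℂ] ℂ).toLinearMap

theorem norm_apply_le_norm_of_mem_closedBall {𝕜 E F : Type*} [NontriviallyNormedField 𝕜]
    [SeminormedAddCommGroup E] [SeminormedAddCommGroup F] [NormedSpace 𝕜 E] [NormedSpace 𝕜 F]
    {f : E →L[𝕜] F} (hf : f ∈ closedBall 0 1) (x : E) : ‖f x‖ ≤ ‖x‖ := by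
  simpa using f.le_of_opNorm_le (mem_closedBall_zero_iff.1 hf) x

section supNormSeminorm

variable {B : Set (X →L[ℂ] ℂ)}

theorem supNormSeminorm_apply (hB : B ⊆ closedBall 0 1) (x : X) :
    supNormSeminorm B x = ⨆ f : B, ‖(f : X →L[ℂ] ℂ) x‖ := by
  refine Seminorm.iSup_apply (Seminorm.bddAbove_range_iff.2 fun x => ⟨‖x‖, ?_⟩)
  rintro _ ⟨f, rfl⟩
  simpa using norm_apply_le_norm_of_mem_closedBall (hB f.2) x

theorem supNormSeminorm_le_of_forall_le (hB : B ⊆ closedBall 0 1) {x : X} {r : ℝ} (hr : 0 ≤ r)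
    (h : ∀ f ∈ B, ‖f x‖ ≤ r) : supNormSeminorm B x ≤ r := by
  rw [supNormSeminorm_apply hB]
  exact Real.iSup_le (fun f => h f f.2) hr

theorem supNormSeminorm_le_norm (hB : B ⊆ closedBall 0 1) (x : X) :
    supNormSeminorm B x ≤ ‖x‖ :=
  supNormSeminorm_le_of_forall_le hB (norm_nonneg x) fun _ hf =>
    norm_apply_le_norm_of_mem_closedBall (hB hf) x

theorem norm_apply_le_supNormSeminorm (hB : B ⊆ closedBall 0 1) {f : X →L[ℂ] ℂ} (hf : f ∈ B)
    (x : X) : ‖f x‖ ≤ supNormSeminorm B x := by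
  rw [supNormSeminorm_apply hB]
  refine le_ciSup (f := fun f : B => ‖(f : X →L[ℂ] ℂ) x‖) ⟨‖x‖, ?_⟩ ⟨f, hf⟩
  rintro _ ⟨g, rfl⟩
  exact norm_apply_le_norm_of_mem_closedBall (hB g.2) x

end supNormSeminorm

section normAddSeminorm

variable (p : Seminorm ℂ X) {M : ℝ}

theorem isNormOn_norm_add_mul_seminorm (hM : 0 ≤ M) : IsNormOn fun x : X => ‖x‖ + M * p x := by
  have hpos : ∀ x : X, 0 ≤ M * p x := fun x => mul_nonneg hM (apply_nonneg p x)
  refine ⟨fun x => add_nonneg (norm_nonneg x) (hpos x), fun x hx => ?_, fun c x => ?_,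
    fun x y => ?_⟩
  · exact norm_eq_zero.1 (le_antisymm (by linarith [hpos x]) (norm_nonneg x))
  · change ‖c • x‖ + M * p (c • x) = ‖c‖ * (‖x‖ + M * p x)
    rw [norm_smul, map_smul_eq_mul]
    ring
  · nlinarith [norm_add_le x y, map_add_le_add p x y]

theorem abs_norm_add_mul_seminorm_sub_le (hM : 0 ≤ M) (hp : ∀ x, p x ≤ ‖x‖) (x y : X) :
    |(‖x‖ + M * p x) - (‖y‖ + M * p y)| ≤ (1 + M) * ‖x - y‖ := by
  have hnorm := abs_norm_sub_norm_le x y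
  have hsemi : |p x - p y| ≤ ‖x - y‖ := (abs_sub_map_le_sub p x y).trans (hp _)
  calc |(‖x‖ + M * p x) - (‖y‖ + M * p y)| = |(‖x‖ - ‖y‖) + M * (p x - p y)| := by ring_nf
    _ ≤ |‖x‖ - ‖y‖| + M * |p x - p y| := by
      simpa only [abs_mul, abs_of_nonneg hM] using abs_add_le (‖x‖ - ‖y‖) (M * (p x - p y))
    _ ≤ (1 + M) * ‖x - y‖ := by nlinarith

end normAddSeminorm

theorem Inevitable.exists_norm_eq_one_norm_sub_lt {A : Set X} (hA : Inevitable A)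
    (hAS : A ⊆ sphere 0 1) {Y : Submodule ℂ X} (hY : IsClosed (Y : Set X))
    (hYfd : ¬ FiniteDimensional ℂ Y) {ε : ℝ} (hε : 0 < ε) :
    ∃ y ∈ Y, ‖y‖ = 1 ∧ ∃ a ∈ A, ‖y - a‖ < ε := by
  obtain ⟨h, hY, a, ha, hha⟩ := hA Y hY hYfd (min ε 1 / 2) (by positivity)
  have hnorm_a : ‖a‖ = 1 := mem_sphere_zero_iff_norm.1 (hAS ha)
  have hnorm_h : |‖h‖ - 1| ≤ ‖h - a‖ := hnorm_a ▸ abs_norm_sub_norm_le h a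
  have hh : h ≠ 0 := by
    rintro rfl
    simp only [norm_zero, zero_sub, abs_neg, abs_one, norm_neg, hnorm_a] at hnorm_h hha
    linarith [min_le_right ε 1]
  refine ⟨(‖h‖⁻¹ : ℂ) • h, Y.smul_mem _ hY, norm_smul_inv_norm hh, a, ha, ?_⟩
  have hnormalise : ‖(‖h‖⁻¹ : ℂ) • h - h‖ = |‖h‖ - 1| := by
    have hsmul : (‖h‖⁻¹ : ℂ) • h - h = ((‖h‖⁻¹ - 1 : ℝ) : ℂ) • h := by simp [sub_smul]
    rw [hsmul, norm_smul, Complex.norm_real, Real.norm_eq_abs, ← abs_norm h, ← abs_mul, abs_norm,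
      sub_mul, inv_mul_cancel₀ (norm_ne_zero_iff.2 hh), one_mul, abs_sub_comm]
  calc ‖(‖h‖⁻¹ : ℂ) • h - a‖ ≤ ‖(‖h‖⁻¹ : ℂ) • h - h‖ + ‖h - a‖ :=
        norm_sub_le_norm_sub_add_norm_sub _ _ _
    _ ≤ 2 * ‖h - a‖ := by linarith
    _ < ε := by linarith [min_le_left ε 1]

theorem distortable_of_forall_exists_le_div {N : X → ℝ} (hN : IsNormOn N) {C : ℝ} (hC : 0 < C)
    (hle : ∀ x, ‖x‖ ≤ N x) (hge : ∀ x, N x ≤ C * ‖x‖) {lam : ℝ}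
    (hY : ∀ Y : Submodule ℂ X, IsClosed (Y : Set X) → ¬ FiniteDimensional ℂ Y →
      ∃ x ∈ Y, ∃ y ∈ Y, ‖x‖ = 1 ∧ ‖y‖ = 1 ∧ lam ≤ N x / N y) :
    Distortable X lam := by
  refine ⟨N, hN, ⟨1, one_pos, C, hC, fun x => ⟨by simpa using hle x, hge x⟩⟩,
    fun Y hYc hYfd => ?_⟩
  obtain ⟨x, hx, y, hy, hx1, hy1, hlam⟩ := hY Y hYc hYfd
  refine hlam.trans (le_csSup ⟨C, ?_⟩ ⟨x, hx, y, hy, hx1, hy1, rfl⟩)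
  rintro _ ⟨u, -, v, -, hu, hv, rfl⟩
  calc N u / N v ≤ N u := div_le_self (hN.1 u) (by simpa [hv] using hle v)
    _ ≤ C := by simpa [hu] using hge u

theorem distortable_of_inevitable_of_inevitable {N : X → ℝ} (hN : IsNormOn N) {L : ℝ}
    (hL : 0 < L) (hle : ∀ x, ‖x‖ ≤ N x) (hlip : ∀ x y, |N x - N y| ≤ L * ‖x - y‖)
    {A A' : Set X} (hA : Inevitable A) (hAS : A ⊆ sphere 0 1) (hA' : Inevitable A')
    (hA'S : A' ⊆ sphere 0 1) {α β : ℝ} (hα : ∀ a ∈ A, α ≤ N a) (hβ : ∀ b ∈ A', N b ≤ β) :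
    Distortable X ((α - 1) / (β + 1)) := by
  have hN0 : N 0 = 0 := by simpa using hN.2.2.1 0 0
  refine distortable_of_forall_exists_le_div hN hL hle
    (fun x => by simpa [hN0] using (abs_le.1 (hlip x 0)).2) fun Y hYc hYfd => ?_
  -- moving by less than `L⁻¹` changes `N` by less than `1`
  obtain ⟨x, hxY, hx1, a, ha, hxa⟩ :=
    hA.exists_norm_eq_one_norm_sub_lt hAS hYc hYfd (inv_pos.2 hL)
  obtain ⟨y, hyY, hy1, b, hb, hyb⟩ :=
    hA'.exists_norm_eq_one_norm_sub_lt hA'S hYc hYfd (inv_pos.2 hL)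
  have hxa' : L * ‖x - a‖ < 1 := (mul_lt_mul_of_pos_left hxa hL).trans_eq (mul_inv_cancel₀ hL.ne')
  have hyb' : L * ‖y - b‖ < 1 := (mul_lt_mul_of_pos_left hyb hL).trans_eq (mul_inv_cancel₀ hL.ne')
  have hNx : α - 1 ≤ N x := by linarith [(abs_le.1 (hlip x a)).1, hα a ha]
  have hNy : N y ≤ β + 1 := by linarith [(abs_le.1 (hlip y b)).2, hβ b hb]
  have hNy_pos : 0 < N y := one_pos.trans_le (hy1 ▸ hle y)
  refine ⟨x, hxY, y, hyY, hx1, hy1, ?_⟩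
  calc (α - 1) / (β + 1) ≤ N x / (β + 1) := by gcongr; linarith
    _ ≤ N x / N y := div_le_div_of_nonneg_left (hN.1 x) hNy_pos hNy

theorem InevitableBiorthSystem.distortable {δ : ℝ} (hδ : 0 < δ)
    (hsys : InevitableBiorthSystem X δ) : Distortable X ((δ⁻¹ - 1) / 3) := by
  obtain ⟨A, B, hAS, hB, hA, hnorming, hbiorth⟩ := hsys
  set p := supNormSeminorm (B 0)
  have hM : 0 ≤ δ⁻¹ := inv_nonneg.2 hδ.le
  have hMδ : δ⁻¹ * δ = 1 := inv_mul_cancel₀ hδ.ne'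
  have hN_A0 : ∀ a ∈ A 0, δ⁻¹ ≤ ‖a‖ + δ⁻¹ * p a := by
    intro a ha
    obtain ⟨f, hf, hfa⟩ := hnorming 0 a ha
    have hpa : 1 - δ ≤ p a :=
      hfa.trans ((Complex.re_le_norm _).trans (norm_apply_le_supNormSeminorm (hB 0) hf a))
    have ha1 : ‖a‖ = 1 := mem_sphere_zero_iff_norm.1 (hAS 0 ha)
    nlinarith
  have hN_A1 : ∀ b ∈ A 1, ‖b‖ + δ⁻¹ * p b ≤ 2 := by
    intro b hb
    have hpb : p b ≤ δ := supNormSeminorm_le_of_forall_le (hB 0) hδ.le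
      fun f hf => hbiorth 1 0 one_ne_zero b hb f hf
    have hb1 : ‖b‖ = 1 := mem_sphere_zero_iff_norm.1 (hAS 1 hb)
    nlinarith
  convert distortable_of_inevitable_of_inevitable (isNormOn_norm_add_mul_seminorm p hM)
    (by positivity : 0 < 1 + δ⁻¹)
    (fun x => le_add_of_nonneg_right (mul_nonneg hM (apply_nonneg p x)))
    (abs_norm_add_mul_seminorm_sub_le p hM (supNormSeminorm_le_norm (hB 0)))
    (hA 0) (hAS 0) (hA 1) (hAS 1) hN_A0 hN_A1 using 2
  norm_num

end

theorem arbitrarilyDistortable_of_inevitableBiorthSystem_general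
    (X : Type*) [NormedAddCommGroup X] [NormedSpace ℂ X]
    (h : ∀ δ : ℝ, 0 < δ → δ < 1 / 2 → InevitableBiorthSystem X δ) :
    ArbitrarilyDistortable X := by
  intro lam hlam
  have hδ : 0 < (3 * lam + 1)⁻¹ := by positivity
  have hδ_lt : (3 * lam + 1)⁻¹ < 1 / 2 := by
    rw [one_div]; exact inv_strictAnti₀ two_pos (by linarith)
  simpa using (h _ hδ hδ_lt).distortable hδ

/-- An infinite-dimensional Banach space admitting an inevitable
biorthogonal system with constant `δ` for every `0 < δ < 1/2` is arbitrarily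
distortable. -/
theorem arbitrarilyDistortable_of_inevitableBiorthSystem
    (X : Type*) [NormedAddCommGroup X] [NormedSpace ℂ X] [CompleteSpace X]
    (hX : ¬ FiniteDimensional ℂ X)
    (h : ∀ δ : ℝ, 0 < δ → δ < 1 / 2 → InevitableBiorthSystem X δ) :
    ArbitrarilyDistortable X :=
  arbitrarilyDistortable_of_inevitableBiorthSystem_general X h
end
end

section
/- Let 1 < p < ∞ and let u_1, …, u_n be nonzero vectors in ℓ_p with pairwise disjoint supports, and set s = ∑_{k=1}^n u_k. Then, coordinatewise, Ω_p(s) − ∑_{k=1}^n Ω_p(u_k) = ∑_{k=1}^n log(‖u_k‖_p/‖s‖_p) · u_k; consequently this difference belongs to ℓ_p and ‖Ω_p(s) − ∑_{k=1}^n Ω_p(u_k)‖_p^p = ∑_{k=1}^n ‖u_k‖_p^p · (log(‖s‖_p/‖u_k‖_p))^p. -/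
noncomputable section

/-- The `ℓ_p` norm of a scalar sequence: `(∑ |f j|^p)^{1/p}`. -/
def pNorm (p : ℝ) (f : ℕ → ℂ) : ℝ := (∑' j, ‖f j‖ ^ p) ^ (1 / p)

/-- `f` belongs to `ℓ_p`: `∑ |f j|^p < ∞`. -/
def MemLpSeq (p : ℝ) (f : ℕ → ℂ) : Prop := Summable fun j => ‖f j‖ ^ p

/-- The Kalton–Peck map: `Ω_p(f)_j = f_j · log(|f_j| / ‖f‖_p)`, with the
conventions `0 · log 0 = 0` and `Ω_p(0) = 0` (automatic since `f_j = 0` kills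
the `j`-th coordinate, and in Lean `log 0 = 0`, `x / 0 = 0`). -/
def KaltonPeck (p : ℝ) (f : ℕ → ℂ) : ℕ → ℂ :=
  fun j => f j * (Real.log (‖f j‖ / pNorm p f) : ℂ)

/-- For nonzero, pairwise disjointly supported
`u_1, …, u_n ∈ ℓ_p` with sum `s`, coordinatewise
`Ω_p(s) − ∑ Ω_p(u_k) = ∑ log(‖u_k‖_p/‖s‖_p)·u_k`; consequently this difference
lies in `ℓ_p` and
`‖Ω_p(s) − ∑ Ω_p(u_k)‖_p^p = ∑ ‖u_k‖_p^p (log(‖s‖_p/‖u_k‖_p))^p`. -/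
theorem kaltonPeck_diff_of_disjoint
    (p : ℝ) (hp : 1 < p) (n : ℕ) (u : Fin n → ℕ → ℂ)
    (hmem : ∀ k, MemLpSeq p (u k)) (hne : ∀ k, u k ≠ 0)
    (hdisj : ∀ k l, k ≠ l → ∀ j, u k j = 0 ∨ u l j = 0) :
    (∀ j, KaltonPeck p (fun i => ∑ k, u k i) j - ∑ k, KaltonPeck p (u k) j =
      ∑ k, (Real.log (pNorm p (u k) / pNorm p (fun i => ∑ k', u k' i)) : ℂ) * u k j) ∧
    MemLpSeq p (fun j => KaltonPeck p (fun i => ∑ k, u k i) j - ∑ k, KaltonPeck p (u k) j) ∧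
    pNorm p (fun j => KaltonPeck p (fun i => ∑ k, u k i) j - ∑ k, KaltonPeck p (u k) j) ^ p
      = ∑ k, pNorm p (u k) ^ p *
          Real.log (pNorm p (fun i => ∑ k', u k' i) / pNorm p (u k)) ^ p := by
  have hp0 : (0:ℝ) < p := lt_trans one_pos hp
  have hpne : p ≠ 0 := ne_of_gt hp0
  -- generic: pNorm^p = tsum
  have hpow : ∀ f : ℕ → ℂ, pNorm p f ^ p = ∑' j, ‖f j‖ ^ p := by
    intro f
    have hT : (0:ℝ) ≤ ∑' j, ‖f j‖ ^ p :=
      tsum_nonneg fun j => Real.rpow_nonneg (norm_nonneg _) p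
    rw [pNorm, ← Real.rpow_mul hT, one_div_mul_cancel hpne, Real.rpow_one]
  rcases Nat.eq_zero_or_pos n with rfl | hn
  · refine ⟨?_, ?_, ?_⟩
    · intro j; simp [KaltonPeck]
    · simp only [Finset.univ_eq_empty, Finset.sum_empty, KaltonPeck]
      simp only [MemLpSeq]
      have : ∀ j : ℕ, ‖(0:ℂ) * (Real.log (‖(0:ℂ)‖ / pNorm p (fun _ => 0)) : ℂ) - 0‖ ^ p = 0 := by
        intro j; simp [Real.zero_rpow hpne]
      exact (summable_zero).congr fun j => (this j).symm
    · simp only [Finset.univ_eq_empty, Finset.sum_empty, KaltonPeck]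
      rw [hpow]
      simp [Real.zero_rpow hpne]
  set s : ℕ → ℂ := fun i => ∑ k, u k i with hs_def
  -- key disjointness lemma
  have key : ∀ (v : Fin n → ℂ) (j : ℕ),
      ‖∑ k, v k * u k j‖ ^ p = ∑ k, ‖v k‖ ^ p * ‖u k j‖ ^ p := by
    intro v j
    by_cases h : ∀ k, u k j = 0
    · simp [h, Real.zero_rpow hpne]
    · push_neg at h
      obtain ⟨k0, hk0⟩ := h
      have hz : ∀ l, l ≠ k0 → u l j = 0 := fun l hl =>
        (hdisj l k0 hl j).resolve_right hk0
      rw [Finset.sum_eq_single k0 (fun l _ hl => by rw [hz l hl, mul_zero])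
          (fun h => absurd (Finset.mem_univ k0) h),
        Finset.sum_eq_single k0 (fun l _ hl => by simp [hz l hl, Real.zero_rpow hpne])
          (fun h => absurd (Finset.mem_univ k0) h),
        norm_mul, Real.mul_rpow (norm_nonneg _) (norm_nonneg _)]
  have hs_coord : ∀ j, ‖s j‖ ^ p = ∑ k, ‖u k j‖ ^ p := by
    intro j
    have := key (fun _ => 1) j
    simpa [hs_def] using this
  have hsum_s : Summable fun j => ‖s j‖ ^ p := by
    have : Summable fun j => ∑ k, ‖u k j‖ ^ p :=
      summable_sum fun k _ => hmem k
    exact this.congr fun j => (hs_coord j).symm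
  -- positivity of norms
  have hNpos : ∀ k, 0 < pNorm p (u k) := by
    intro k
    obtain ⟨j, hj⟩ : ∃ j, u k j ≠ 0 := by
      by_contra h; push_neg at h; exact hne k (funext h)
    have hT : 0 < ∑' j, ‖u k j‖ ^ p :=
      Summable.tsum_pos (hmem k) (fun j => Real.rpow_nonneg (norm_nonneg _) p) j
        (Real.rpow_pos_of_pos (norm_pos_iff.mpr hj) p)
    exact Real.rpow_pos_of_pos hT _
  have hNs_pos : 0 < pNorm p s := by
    have k0 : Fin n := ⟨0, hn⟩
    obtain ⟨j, hj⟩ : ∃ j, u k0 j ≠ 0 := by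
      by_contra h; push_neg at h; exact hne k0 (funext h)
    have hsj : (0:ℝ) < ‖s j‖ ^ p := by
      rw [hs_coord j]
      refine Finset.sum_pos' (fun l _ => Real.rpow_nonneg (norm_nonneg _) p) ⟨k0,
        Finset.mem_univ k0, Real.rpow_pos_of_pos (norm_pos_iff.mpr hj) p⟩
    have hT : 0 < ∑' j, ‖s j‖ ^ p :=
      Summable.tsum_pos hsum_s (fun j => Real.rpow_nonneg (norm_nonneg _) p) j hsj
    exact Real.rpow_pos_of_pos hT _
  -- coordinate identity
  have hcoord : ∀ j, KaltonPeck p s j - ∑ k, KaltonPeck p (u k) j =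
      ∑ k, (Real.log (pNorm p (u k) / pNorm p s) : ℂ) * u k j := by
    intro j
    by_cases h : ∀ k, u k j = 0
    · have hsj : s j = 0 := by simp [hs_def, h]
      simp [KaltonPeck, h, hsj]
    · push_neg at h
      obtain ⟨k0, hk0⟩ := h
      have hz : ∀ l, l ≠ k0 → u l j = 0 := fun l hl =>
        (hdisj l k0 hl j).resolve_right hk0
      have hsj : s j = u k0 j := by
        simp only [hs_def]
        exact Finset.sum_eq_single k0 (fun l _ hl => hz l hl)
          (fun h => absurd (Finset.mem_univ k0) h)
      have h1 : ∑ k, KaltonPeck p (u k) j = KaltonPeck p (u k0) j :=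
        Finset.sum_eq_single k0 (fun l _ hl => by simp [KaltonPeck, hz l hl])
          (fun h => absurd (Finset.mem_univ k0) h)
      have h2 : ∑ k, (Real.log (pNorm p (u k) / pNorm p s) : ℂ) * u k j
          = (Real.log (pNorm p (u k0) / pNorm p s) : ℂ) * u k0 j :=
        Finset.sum_eq_single k0 (fun l _ hl => by rw [hz l hl, mul_zero])
          (fun h => absurd (Finset.mem_univ k0) h)
      rw [h1, h2]
      simp only [KaltonPeck, hsj]
      rw [← mul_sub, mul_comm ((Real.log (pNorm p (u k0) / pNorm p s) : ℂ)) (u k0 j)]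
      congr 1
      rw [← Complex.ofReal_sub]
      congr 1
      rw [Real.log_div (norm_ne_zero_iff.mpr hk0) (ne_of_gt hNs_pos),
        Real.log_div (norm_ne_zero_iff.mpr hk0) (ne_of_gt (hNpos k0)),
        Real.log_div (ne_of_gt (hNpos k0)) (ne_of_gt hNs_pos)]
      ring
  -- the difference and its norms
  set c : Fin n → ℝ := fun k => Real.log (pNorm p (u k) / pNorm p s) with hc_def
  have hd_norm : ∀ j, ‖KaltonPeck p s j - ∑ k, KaltonPeck p (u k) j‖ ^ p
      = ∑ k, |c k| ^ p * ‖u k j‖ ^ p := by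
    intro j
    rw [hcoord j]
    have := key (fun k => (c k : ℂ)) j
    simpa [Complex.norm_real, Real.norm_eq_abs] using this
  have hmem_d : MemLpSeq p (fun j => KaltonPeck p s j - ∑ k, KaltonPeck p (u k) j) := by
    have : Summable fun j => ∑ k, |c k| ^ p * ‖u k j‖ ^ p :=
      summable_sum fun k _ => (hmem k).mul_left _
    exact this.congr fun j => (hd_norm j).symm
  -- norms comparison
  have hle : ∀ k, pNorm p (u k) ≤ pNorm p s := by
    intro k
    have h1 : ∀ j, ‖u k j‖ ^ p ≤ ‖s j‖ ^ p := by
      intro j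
      rw [hs_coord j]
      exact Finset.single_le_sum (fun l _ => Real.rpow_nonneg (norm_nonneg (u l j)) p)
        (Finset.mem_univ k)
    have h2 : (∑' j, ‖u k j‖ ^ p) ≤ ∑' j, ‖s j‖ ^ p :=
      Summable.tsum_le_tsum h1 (hmem k) hsum_s
    exact Real.rpow_le_rpow (tsum_nonneg fun j => Real.rpow_nonneg (norm_nonneg _) p)
      h2 (le_of_lt (one_div_pos.mpr hp0))
  have habs : ∀ k, |c k| = Real.log (pNorm p s / pNorm p (u k)) := by
    intro k
    have h1 : c k = -(Real.log (pNorm p s / pNorm p (u k))) := by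
      show Real.log (pNorm p (u k) / pNorm p s) = _
      rw [Real.log_div (ne_of_gt (hNpos k)) (ne_of_gt hNs_pos),
        Real.log_div (ne_of_gt hNs_pos) (ne_of_gt (hNpos k))]
      ring
    have h2 : 0 ≤ Real.log (pNorm p s / pNorm p (u k)) :=
      Real.log_nonneg ((one_le_div (hNpos k)).mpr (hle k))
    rw [h1, abs_neg, abs_of_nonneg h2]
  refine ⟨hcoord, hmem_d, ?_⟩
  rw [hpow, tsum_congr hd_norm, Summable.tsum_finsetSum (fun k _ => (hmem k).mul_left _)]
  refine Finset.sum_congr rfl fun k _ => ?_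
  rw [tsum_mul_left, ← hpow, habs k, mul_comm]
end
end

section
/- Let 1 < p < ∞ and 0 < η ≤ M. Then there exist ρ > 0 and N ∈ ℕ such that for every n ≥ N and all vectors u_1, …, u_n in ℓ_p with pairwise disjoint supports satisfying η ≤ ‖u_k‖_p ≤ M for every k, one has ‖Ω_p(∑_{k=1}^n u_k) − ∑_{k=1}^n Ω_p(u_k)‖_p ≥ ρ · n^{1/p} · log n. -/
noncomputable section

/-- If at most one of the `v k` is nonzero, then `‖∑ v k‖^p = ∑ ‖v k‖^p`. -/
private lemma norm_sum_rpow_aux {n : ℕ} {p : ℝ} (hp : p ≠ 0) (v : Fin n → ℂ)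
    (h : ∀ k l, k ≠ l → v k = 0 ∨ v l = 0) :
    ‖∑ k, v k‖ ^ p = ∑ k, ‖v k‖ ^ p := by
  by_cases hz : ∀ k, v k = 0
  · simp [hz, Real.zero_rpow hp]
  · push_neg at hz
    obtain ⟨k0, hk0⟩ := hz
    have hrest : ∀ l, l ≠ k0 → v l = 0 := fun l hl =>
      (h k0 l (Ne.symm hl)).resolve_left hk0
    rw [Finset.sum_eq_single k0 (fun l _ hl => hrest l hl) (by simp),
        Finset.sum_eq_single k0
          (fun l _ hl => by rw [hrest l hl]; simp [Real.zero_rpow hp]) (by simp)]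

/-- For `1 < p < ∞` and `0 < η ≤ M` there are `ρ > 0` and
`N ∈ ℕ` such that for all `n ≥ N` and all pairwise disjointly supported
`u_1, …, u_n ∈ ℓ_p` with `η ≤ ‖u_k‖_p ≤ M`,
`‖Ω_p(∑ u_k) − ∑ Ω_p(u_k)‖_p ≥ ρ n^{1/p} log n`. -/
theorem kaltonPeck_lower_bound
    (p : ℝ) (hp : 1 < p) (η M : ℝ) (hη : 0 < η) (hηM : η ≤ M) :
    ∃ ρ > (0 : ℝ), ∃ N : ℕ, ∀ n : ℕ, N ≤ n → ∀ u : Fin n → ℕ → ℂ,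
      (∀ k, MemLpSeq p (u k)) →
      (∀ k l, k ≠ l → ∀ j, u k j = 0 ∨ u l j = 0) →
      (∀ k, η ≤ pNorm p (u k) ∧ pNorm p (u k) ≤ M) →
      ρ * (n : ℝ) ^ (1 / p) * Real.log n ≤
        pNorm p (fun j =>
          KaltonPeck p (fun i => ∑ k, u k i) j - ∑ k, KaltonPeck p (u k) j) := by
  have hp0 : (0:ℝ) < p := lt_trans one_pos hp
  have hpne : p ≠ 0 := ne_of_gt hp0
  have hM0 : 0 < M := lt_of_lt_of_le hη hηM
  refine ⟨η / (2*p), by positivity, ⌈Real.exp (2*p*Real.log (M/η))⌉₊ + 2, ?_⟩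
  intro n hn u hmem hdisj hbound
  have hn2 : 2 ≤ n := le_trans (Nat.le_add_left 2 _) hn
  have hn0 : (0:ℝ) < n := by positivity
  have hn1 : (1:ℝ) ≤ n := by exact_mod_cast Nat.one_le_of_lt hn2
  have hlogn : 0 ≤ Real.log n := Real.log_nonneg hn1
  -- choice of N gives `log(M/η) ≤ (1/(2p)) log n`
  have hlogMη : Real.log (M/η) ≤ 1/(2*p) * Real.log n := by
    have h1 : Real.exp (2*p*Real.log (M/η)) ≤ n := by
      calc Real.exp (2*p*Real.log (M/η)) ≤ (⌈Real.exp (2*p*Real.log (M/η))⌉₊ : ℝ) :=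
            Nat.le_ceil _
        _ ≤ n := by exact_mod_cast le_trans (Nat.le_add_right _ 2) hn
    have h2 : 2*p*Real.log (M/η) ≤ Real.log n := (Real.le_log_iff_exp_le hn0).mpr h1
    rw [div_mul_eq_mul_div, le_div_iff₀ (by positivity)]
    linarith
  -- norms of the pieces
  set S : Fin n → ℝ := fun k => ∑' j, ‖u k j‖ ^ p with hS
  have hSnn : ∀ k, 0 ≤ S k := fun k => tsum_nonneg fun j => Real.rpow_nonneg (norm_nonneg _) p
  have hpnk : ∀ k, pNorm p (u k) = (S k) ^ (1/p) := fun k => rfl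
  have hSlb : ∀ k, η ^ p ≤ S k := by
    intro k
    have := Real.rpow_le_rpow (le_of_lt hη) (hbound k).1 (le_of_lt hp0)
    rwa [hpnk, one_div, Real.rpow_inv_rpow (hSnn k) hpne] at this
  have hSub : ∀ k, S k ≤ M ^ p := by
    intro k
    have := Real.rpow_le_rpow (le_trans hη.le (hbound k).1) (hbound k).2 (le_of_lt hp0)
    rwa [hpnk, one_div, Real.rpow_inv_rpow (hSnn k) hpne] at this
  -- the norm of the sum
  have hA : ∀ j, ‖∑ k, u k j‖ ^ p = ∑ k, ‖u k j‖ ^ p := by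
    intro j
    exact norm_sum_rpow_aux hpne (fun k => u k j) (fun k l hkl => hdisj k l hkl j)
  set T : ℝ := ∑' j, ‖(∑ k, u k j : ℂ)‖ ^ p with hTdef
  have hT : T = ∑ k, S k := by
    rw [hTdef]
    calc (∑' j, ‖(∑ k, u k j : ℂ)‖ ^ p) = ∑' j, ∑ k, ‖u k j‖ ^ p := by
          exact tsum_congr hA
      _ = ∑ k, S k := Summable.tsum_finsetSum (fun k _ => hmem k)
  have hTlb : (n:ℝ) * η ^ p ≤ T := by
    rw [hT]
    calc (n:ℝ) * η ^ p = ∑ _k : Fin n, η ^ p := by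
          rw [Finset.sum_const, Finset.card_univ, Fintype.card_fin, nsmul_eq_mul]
      _ ≤ ∑ k, S k := Finset.sum_le_sum fun k _ => hSlb k
  have hTub : T ≤ (n:ℝ) * M ^ p := by
    rw [hT]
    calc (∑ k, S k) ≤ ∑ _k : Fin n, M ^ p := Finset.sum_le_sum fun k _ => hSub k
      _ = (n:ℝ) * M ^ p := by
          rw [Finset.sum_const, Finset.card_univ, Fintype.card_fin, nsmul_eq_mul]
  have hTnn : 0 ≤ T := le_trans (by positivity) hTlb
  set F : ℝ := pNorm p (fun i => ∑ k, u k i) with hFdef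
  have hF : F = T ^ (1/p) := rfl
  have hFlb : η * (n:ℝ) ^ (1/p) ≤ F := by
    have := Real.rpow_le_rpow (by positivity) hTlb (by positivity : (0:ℝ) ≤ 1/p)
    rw [Real.mul_rpow (le_of_lt hn0) (by positivity), one_div,
        Real.rpow_rpow_inv (le_of_lt hη) hpne] at this
    rw [hF]
    calc η * (n:ℝ) ^ (1/p) = (n:ℝ) ^ (1/p) * η := mul_comm _ _
      _ ≤ T ^ (1/p) := by rw [one_div]; exact this
  have hFpos : 0 < F := lt_of_lt_of_le (by positivity) hFlb
  -- the coefficients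
  set c : Fin n → ℝ := fun k => Real.log (pNorm p (u k) / F) with hc
  have hUpos : ∀ k, 0 < pNorm p (u k) := fun k => lt_of_lt_of_le hη (hbound k).1
  have hcub : ∀ k, c k ≤ -(1/(2*p) * Real.log n) := by
    intro k
    have h1 : pNorm p (u k) / F ≤ (M/η) / (n:ℝ) ^ (1/p) := by
      rw [div_div]
      exact div_le_div₀ (le_of_lt hM0) (hbound k).2 (by positivity) hFlb
    have h2 : Real.log (pNorm p (u k) / F) ≤ Real.log ((M/η) / (n:ℝ) ^ (1/p)) :=
      Real.log_le_log (div_pos (hUpos k) hFpos) h1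
    have h3 : Real.log ((M/η) / (n:ℝ) ^ (1/p))
        = Real.log (M/η) - 1/p * Real.log n := by
      rw [Real.log_div (by positivity) (by positivity), Real.log_rpow hn0]
    rw [hc]
    have h4 : 1/(2*p) * Real.log n - 1/p * Real.log n = -(1/(2*p) * Real.log n) := by
      field_simp; ring
    calc Real.log (pNorm p (u k) / F) ≤ Real.log (M/η) - 1/p * Real.log n := by
          rw [← h3]; exact h2
      _ ≤ 1/(2*p) * Real.log n - 1/p * Real.log n := by linarith
      _ = -(1/(2*p) * Real.log n) := h4
  have hLnn : 0 ≤ 1/(2*p) * Real.log n := by positivity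
  have hcabs : ∀ k, 1/(2*p) * Real.log n ≤ |c k| := by
    intro k
    have := neg_abs_le (c k)
    have h := hcub k
    nlinarith [abs_nonneg (c k)]
  -- the pointwise formula for the difference
  have hG : ∀ j, KaltonPeck p (fun i => ∑ k, u k i) j - ∑ k, KaltonPeck p (u k) j
      = ∑ k, u k j * (c k : ℂ) := by
    intro j
    by_cases hz : ∀ k, u k j = 0
    · simp [KaltonPeck, hz]
    · push_neg at hz
      obtain ⟨k0, hk0⟩ := hz
      have hrest : ∀ l, l ≠ k0 → u l j = 0 := fun l hl =>
        (hdisj k0 l (Ne.symm hl) j).resolve_left hk0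
      have hsum : (∑ k, u k j) = u k0 j :=
        Finset.sum_eq_single k0 (fun l _ hl => hrest l hl) (by simp)
      have hsum2 : (∑ k, KaltonPeck p (u k) j) = KaltonPeck p (u k0) j :=
        Finset.sum_eq_single k0
          (fun l _ hl => by simp [KaltonPeck, hrest l hl]) (by simp)
      have hsum3 : (∑ k, u k j * (c k : ℂ)) = u k0 j * (c k0 : ℂ) :=
        Finset.sum_eq_single k0 (fun l _ hl => by simp [hrest l hl]) (by simp)
      rw [hsum2, hsum3]
      have hnormpos : 0 < ‖u k0 j‖ := norm_pos_iff.mpr hk0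
      have hlog : Real.log (‖u k0 j‖ / F) - Real.log (‖u k0 j‖ / pNorm p (u k0))
          = c k0 := by
        show _ = Real.log (pNorm p (u k0) / F)
        rw [Real.log_div (ne_of_gt hnormpos) (ne_of_gt hFpos),
            Real.log_div (ne_of_gt hnormpos) (ne_of_gt (hUpos k0)),
            Real.log_div (ne_of_gt (hUpos k0)) (ne_of_gt hFpos)]
        ring
      show (∑ k, u k j) * (Real.log (‖∑ k, u k j‖ / F) : ℂ) - _ = _
      rw [hsum]
      unfold KaltonPeck
      rw [← mul_sub, ← Complex.ofReal_sub, hlog]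
  -- compute the p-norm of the difference
  have hGnorm : ∀ j, ‖(∑ k, u k j * (c k : ℂ))‖ ^ p
      = ∑ k, ‖u k j‖ ^ p * |c k| ^ p := by
    intro j
    rw [norm_sum_rpow_aux hpne (fun k => u k j * (c k : ℂ))
        (fun k l hkl => by rcases hdisj k l hkl j with h | h <;> simp [h])]
    refine Finset.sum_congr rfl fun k _ => ?_
    rw [norm_mul, Complex.norm_real, Real.norm_eq_abs,
        Real.mul_rpow (norm_nonneg _) (abs_nonneg _)]
  have hsummable : ∀ k, Summable fun j => ‖u k j‖ ^ p * |c k| ^ p :=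
    fun k => (hmem k).mul_right _
  have htsumG : (∑' j, ‖(∑ k, u k j * (c k : ℂ))‖ ^ p) = ∑ k, S k * |c k| ^ p := by
    calc (∑' j, ‖(∑ k, u k j * (c k : ℂ))‖ ^ p)
        = ∑' j, ∑ k, ‖u k j‖ ^ p * |c k| ^ p := tsum_congr hGnorm
      _ = ∑ k, ∑' j, ‖u k j‖ ^ p * |c k| ^ p := Summable.tsum_finsetSum (fun k _ => hsummable k)
      _ = ∑ k, S k * |c k| ^ p := by
          refine Finset.sum_congr rfl fun k _ => ?_
          rw [tsum_mul_right]
  -- lower bound for the tsum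
  set L : ℝ := 1/(2*p) * Real.log n with hLdef
  have hlb : (n:ℝ) * (η ^ p * L ^ p) ≤ ∑ k, S k * |c k| ^ p := by
    calc (n:ℝ) * (η ^ p * L ^ p) = ∑ _k : Fin n, η ^ p * L ^ p := by
          rw [Finset.sum_const, Finset.card_univ, Fintype.card_fin, nsmul_eq_mul]
      _ ≤ ∑ k, S k * |c k| ^ p := by
          refine Finset.sum_le_sum fun k _ => ?_
          exact mul_le_mul (hSlb k)
            (Real.rpow_le_rpow hLnn (hcabs k) (le_of_lt hp0))
            (Real.rpow_nonneg hLnn p) (hSnn k)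
  -- conclude
  have hfinal : ((n:ℝ) * (η ^ p * L ^ p)) ^ (1/p)
      ≤ pNorm p (fun j =>
          KaltonPeck p (fun i => ∑ k, u k i) j - ∑ k, KaltonPeck p (u k) j) := by
    have heq : pNorm p (fun j =>
        KaltonPeck p (fun i => ∑ k, u k i) j - ∑ k, KaltonPeck p (u k) j)
        = (∑ k, S k * |c k| ^ p) ^ (1/p) := by
      unfold pNorm
      rw [← htsumG]
      congr 1
      exact tsum_congr fun j => by simp only [hG j]
    rw [heq]
    exact Real.rpow_le_rpow (by positivity) hlb (by positivity)
  have hvalue : ((n:ℝ) * (η ^ p * L ^ p)) ^ (1/p)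
      = (n:ℝ) ^ (1/p) * (η * L) := by
    rw [Real.mul_rpow (le_of_lt hn0) (by positivity),
        Real.mul_rpow (by positivity) (Real.rpow_nonneg hLnn p), one_div,
        Real.rpow_rpow_inv (le_of_lt hη) hpne, Real.rpow_rpow_inv hLnn hpne]
  calc η / (2*p) * (n:ℝ) ^ (1/p) * Real.log n
      = (n:ℝ) ^ (1/p) * (η * L) := by rw [hLdef]; ring
    _ = ((n:ℝ) * (η ^ p * L ^ p)) ^ (1/p) := hvalue.symm
    _ ≤ _ := hfinal
end
end

section
/- Let 1 < p < ∞, let Z be an infinite-dimensional complex Banach space, and let J : ℓ_p → Z be a linear isometric embedding. Assume that (a) every infinite-dimensional closed subspace of Z contains a sequence equivalent to the unit vector basis of ℓ_p, and (b) Z satisfies the Principle of Small Perturbations with respect to J. If A is an inevitable subset of the unit sphere of ℓ_p, then its image J(A) is an inevitable subset of the unit sphere of Z; that is, for every infinite-dimensional closed subspace W of Z, inf{‖w − J(a)‖ : w ∈ W, a ∈ A} = 0. -/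
open scoped ENNReal

noncomputable section

/-- The complex sequence space `ℓ_p` indexed by `ℕ`. -/
abbrev LpSeq (p : ℝ≥0∞) := lp (fun _ : ℕ => ℂ) p

/-- A sequence `w` in `X` is `C`-equivalent to the unit vector basis of `ℓ_p`:
for every finitely supported scalar sequence `lam`,
`C⁻¹ (∑ |lam n|^p)^{1/p} ≤ ‖∑ lam n • w n‖ ≤ C (∑ |lam n|^p)^{1/p}`. -/
def IsEquivUnitVecBasisLp (p : ℝ≥0∞) {X : Type*} [NormedAddCommGroup X]
    [NormedSpace ℂ X] (C : ℝ) (w : ℕ → X) : Prop :=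
  1 ≤ C ∧ ∀ (F : Finset ℕ) (lam : ℕ → ℂ),
    C⁻¹ * (∑ n ∈ F, ‖lam n‖ ^ p.toReal) ^ (1 / p.toReal) ≤ ‖∑ n ∈ F, lam n • w n‖ ∧
    ‖∑ n ∈ F, lam n • w n‖ ≤ C * (∑ n ∈ F, ‖lam n‖ ^ p.toReal) ^ (1 / p.toReal)

/-- `Z` satisfies the Principle of Small Perturbations with respect to a linear
isometric embedding `J : ℓ_p → Z`. -/
def SatisfiesPSP (p : ℝ≥0∞) [Fact (1 ≤ p)] {Z : Type*} [NormedAddCommGroup Z]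
    [NormedSpace ℂ Z] (J : LpSeq p →ₗᵢ[ℂ] Z) : Prop :=
  ∀ w : ℕ → Z, (∃ C : ℝ, IsEquivUnitVecBasisLp p C w) →
    ∃ (k : ℕ → ℕ) (y : ℕ → LpSeq p),
      StrictMono k ∧ (∀ j, y j ≠ 0) ∧
      (∀ j m n, (y j : ∀ _ : ℕ, ℂ) m ≠ 0 → (y (j + 1) : ∀ _ : ℕ, ℂ) n ≠ 0 → m < n) ∧
      (∀ j, ‖y j‖ = 1) ∧ (∀ j, ‖w (k j) - J (y j)‖ ≤ (1 / 2 : ℝ) ^ j)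

lemma blockSep {p : ℝ≥0∞} [Fact (1 ≤ p)] {y : ℕ → LpSeq p}
    (hy0 : ∀ j, y j ≠ 0)
    (hsep : ∀ j m n, (y j : ∀ _ : ℕ, ℂ) m ≠ 0 → (y (j + 1) : ∀ _ : ℕ, ℂ) n ≠ 0 → m < n) :
    ∀ i j, i < j → ∀ m n, (y i : ∀ _ : ℕ, ℂ) m ≠ 0 → (y j : ∀ _ : ℕ, ℂ) n ≠ 0 → m < n := by
  intro i j
  induction j with
  | zero => omega
  | succ j ih =>
    intro hij m n hm hn
    rcases Nat.lt_succ_iff_lt_or_eq.mp hij with h | h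
    · obtain ⟨t, ht⟩ : ∃ t, (y j : ∀ _ : ℕ, ℂ) t ≠ 0 := by
        by_contra hc
        push_neg at hc
        exact hy0 j (lp.eq_zero_iff_coeFn_eq_zero.mpr (funext fun t => hc t))
      exact (ih h m t hm ht).trans (hsep j t n ht hn)
    · subst h; exact hsep i m n hm hn

lemma coeff_le_norm {p : ℝ≥0∞} [Fact (1 ≤ p)] (hpt : 0 < p.toReal)
    {y : ℕ → LpSeq p}
    (hsep : ∀ i j, i < j → ∀ m n, (y i : ∀ _ : ℕ, ℂ) m ≠ 0 → (y j : ∀ _ : ℕ, ℂ) n ≠ 0 → m < n)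
    (hy1 : ∀ j, ‖y j‖ = 1) (F : Finset ℕ) (c : ℕ → ℂ) {j : ℕ} (hj : j ∈ F) :
    ‖c j‖ ≤ ‖∑ i ∈ F, c i • y i‖ := by
  set s : LpSeq p := ∑ i ∈ F, c i • y i with hs
  have hcoe : ∀ m, (s : ∀ _ : ℕ, ℂ) m = ∑ i ∈ F, c i • (y i : ∀ _ : ℕ, ℂ) m := by
    intro m
    rw [hs, lp.coeFn_sum]
    simp [lp.coeFn_smul]
  have hpoint : ∀ m, ‖((c j • y j : LpSeq p) : ∀ _ : ℕ, ℂ) m‖ ^ p.toReal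
      ≤ ‖(s : ∀ _ : ℕ, ℂ) m‖ ^ p.toReal := by
    intro m
    rcases eq_or_ne ((y j : ∀ _ : ℕ, ℂ) m) 0 with h0 | h0
    · rw [lp.coeFn_smul, Pi.smul_apply, h0, smul_zero, norm_zero,
        Real.zero_rpow hpt.ne']
      exact Real.rpow_nonneg (norm_nonneg _) _
    · have : (s : ∀ _ : ℕ, ℂ) m = c j • (y j : ∀ _ : ℕ, ℂ) m := by
        rw [hcoe]
        refine Finset.sum_eq_single_of_mem j hj ?_
        intro i hi hij
        rcases lt_or_gt_of_ne hij with h | h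
        · by_contra hne
          have := hsep i j h m m (by simpa using fun hz => hne (by rw [hz, smul_zero])) h0
          omega
        · by_contra hne
          have := hsep j i h m m h0 (by simpa using fun hz => hne (by rw [hz, smul_zero]))
          omega
      rw [this, lp.coeFn_smul, Pi.smul_apply]
  have hsum1 := (lp.memℓp (c j • y j)).summable hpt
  have hsum2 := (lp.memℓp s).summable hpt
  have hle : ‖c j • y j‖ ^ p.toReal ≤ ‖s‖ ^ p.toReal := by
    rw [lp.norm_rpow_eq_tsum hpt, lp.norm_rpow_eq_tsum hpt]
    exact Summable.tsum_le_tsum hpoint hsum1 hsum2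
  have := (Real.rpow_le_rpow_iff (norm_nonneg _) (norm_nonneg _) hpt).mp hle
  rwa [norm_smul, hy1 j, mul_one] at this

set_option maxHeartbeats 1000000 in
/-- Under hypotheses (a) and (b), the `J`-image of an
inevitable subset of the unit sphere of `ℓ_p` is inevitable in `Z`. -/
theorem image_of_inevitable_is_inevitable
    (p : ℝ≥0∞) [Fact (1 ≤ p)] (hp : 1 < p) (hp' : p ≠ ∞)
    (Z : Type*) [NormedAddCommGroup Z] [NormedSpace ℂ Z] [CompleteSpace Z]
    (hZ : ¬ FiniteDimensional ℂ Z)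
    (J : LpSeq p →ₗᵢ[ℂ] Z)
    (ha : ∀ W : Submodule ℂ Z, IsClosed (W : Set Z) → ¬ FiniteDimensional ℂ W →
      ∃ w : ℕ → Z, (∀ n, w n ∈ W) ∧ ∃ C : ℝ, IsEquivUnitVecBasisLp p C w)
    (hb : SatisfiesPSP p J)
    (A : Set (LpSeq p)) (hA : A ⊆ Metric.sphere (0 : LpSeq p) 1)
    (hAinev : Inevitable A) :
    (⇑J '' A ⊆ Metric.sphere (0 : Z) 1) ∧
    ∀ W : Submodule ℂ Z, IsClosed (W : Set Z) → ¬ FiniteDimensional ℂ W →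
      ∀ ε : ℝ, 0 < ε → ∃ w ∈ W, ∃ a ∈ A, ‖w - J a‖ < ε := by
  have hpt : 1 < p.toReal := by
    have h1 : (1 : ℝ≥0∞).toReal < p.toReal := (ENNReal.toReal_lt_toReal (by simp) hp').mpr hp
    simpa using h1
  have hpt0 : 0 < p.toReal := by linarith
  constructor
  · rintro z ⟨a, haA, rfl⟩
    have h1 : ‖a‖ = 1 := by simpa [mem_sphere_zero_iff_norm] using hA haA
    simp [mem_sphere_zero_iff_norm, J.norm_map, h1]
  · intro W hWc hWfd ε hε
    obtain ⟨w, hwW, hwequiv⟩ := ha W hWc hWfd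
    obtain ⟨k, y, hk, hy0, hsep1, hy1, hclose⟩ := hb w hwequiv
    have hsep := blockSep hy0 hsep1
    obtain ⟨N, hN⟩ : ∃ N : ℕ, (1/2 : ℝ) ^ N < ε / 8 :=
      exists_pow_lt_of_lt_one (by linarith) (by norm_num)
    set y' : ℕ → LpSeq p := fun i => y (N + i) with hy'
    have hsep' : ∀ i j, i < j → ∀ m n,
        (y' i : ∀ _ : ℕ, ℂ) m ≠ 0 → (y' j : ∀ _ : ℕ, ℂ) n ≠ 0 → m < n :=
      fun i j hij => hsep (N + i) (N + j) (by omega)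
    have hy1' : ∀ j, ‖y' j‖ = 1 := fun j => hy1 _
    set H : Submodule ℂ (LpSeq p) := (Submodule.span ℂ (Set.range y')).topologicalClosure
      with hH
    have hHclosed : IsClosed (H : Set (LpSeq p)) := Submodule.isClosed_topologicalClosure _
    have hHfd : ¬ FiniteDimensional ℂ H := by
      intro hfd
      have hmem : ∀ i, y' i ∈ H :=
        fun i => Submodule.le_topologicalClosure _ (Submodule.subset_span ⟨i, rfl⟩)
      set v : ℕ → H := fun i => ⟨y' i, hmem i⟩ with hv
      have hli : LinearIndependent ℂ v := by
        apply LinearIndependent.of_comp H.subtype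
        have hcomp : (H.subtype ∘ v) = y' := rfl
        rw [hcomp, linearIndependent_iff']
        intro s g hsum i hi
        have hbd := coeff_le_norm hpt0 hsep' hy1' s g hi
        rw [hsum, norm_zero] at hbd
        simpa using le_antisymm hbd (norm_nonneg _)
      letI := hfd
      exact Module.Finite.not_linearIndependent_of_infinite v hli
    set δ : ℝ := min (ε / 4) 1 with hδ
    have hδ0 : 0 < δ := lt_min (by linarith) one_pos
    have hδle : δ ≤ ε / 4 := min_le_left _ _
    have hδ1 : δ ≤ 1 := min_le_right _ _
    obtain ⟨h, hhH, a, haA, hha⟩ := hAinev H hHclosed hHfd (δ / 2) (by linarith)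
    have hhcl : h ∈ closure ((Submodule.span ℂ (Set.range y') : Submodule ℂ (LpSeq p)) :
        Set (LpSeq p)) := by
      rw [← Submodule.topologicalClosure_coe]; exact hhH
    obtain ⟨b, hbspan, hhb⟩ := Metric.mem_closure_iff.mp hhcl (δ / 2) (by linarith)
    rw [dist_eq_norm] at hhb
    obtain ⟨c, hc⟩ := Finsupp.mem_span_range_iff_exists_finsupp.mp hbspan
    have hbsum : ∑ i ∈ c.support, c i • y' i = b := hc
    have hba : ‖b - a‖ < δ := by
      have heq : b - a = -(h - b) + (h - a) := by abel
      have h1 : ‖b - a‖ ≤ ‖h - b‖ + ‖h - a‖ := by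
        rw [heq]
        exact (norm_add_le _ _).trans (by rw [norm_neg])
      linarith
    have hanorm : ‖a‖ = 1 := by simpa [mem_sphere_zero_iff_norm] using hA haA
    have hbnorm : ‖b‖ ≤ 2 := by
      have heq : b = a + (b - a) := by abel
      calc ‖b‖ = ‖a + (b - a)‖ := by rw [← heq]
        _ ≤ ‖a‖ + ‖b - a‖ := norm_add_le _ _
        _ ≤ 2 := by rw [hanorm]; linarith
    have hcoeff : ∀ i ∈ c.support, ‖c i‖ ≤ 2 := by
      intro i hi
      have hbd := coeff_le_norm hpt0 hsep' hy1' c.support c hi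
      rw [hbsum] at hbd
      linarith
    refine ⟨∑ i ∈ c.support, c i • w (k (N + i)),
      Submodule.sum_mem W (fun i _ => Submodule.smul_mem W _ (hwW _)), a, haA, ?_⟩
    have hJb : J b = ∑ i ∈ c.support, c i • J (y' i) := by
      rw [← hbsum, map_sum]
      simp [map_smul]
    have key : (∑ i ∈ c.support, c i • w (k (N + i))) - J a
        = (∑ i ∈ c.support, c i • (w (k (N + i)) - J (y' i))) + J (b - a) := by
      rw [map_sub, hJb]
      simp only [smul_sub, Finset.sum_sub_distrib]
      abel
    have hgeo : ∑ i ∈ c.support, (1/2 : ℝ) ^ i ≤ 2 := by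
      have hsub : c.support ⊆ Finset.range (c.support.sup id + 1) := fun i hi =>
        Finset.mem_range.mpr (Nat.lt_succ_of_le (Finset.le_sup (f := id) hi))
      calc ∑ i ∈ c.support, (1/2 : ℝ) ^ i
          ≤ ∑ i ∈ Finset.range (c.support.sup id + 1), (1/2 : ℝ) ^ i :=
            Finset.sum_le_sum_of_subset_of_nonneg hsub (fun i _ _ => by positivity)
        _ ≤ 2 := sum_geometric_two_le _
    have hsumbound : ‖∑ i ∈ c.support, c i • (w (k (N + i)) - J (y' i))‖
        ≤ 4 * (1/2 : ℝ) ^ N := by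
      calc ‖∑ i ∈ c.support, c i • (w (k (N + i)) - J (y' i))‖
          ≤ ∑ i ∈ c.support, ‖c i • (w (k (N + i)) - J (y' i))‖ := norm_sum_le _ _
        _ ≤ ∑ i ∈ c.support, 2 * (1/2 : ℝ) ^ (N + i) := by
            refine Finset.sum_le_sum fun i hi => ?_
            rw [norm_smul]
            exact mul_le_mul (hcoeff i hi) (hclose (N + i)) (norm_nonneg _) (by norm_num)
        _ = 2 * (1/2 : ℝ) ^ N * ∑ i ∈ c.support, (1/2 : ℝ) ^ i := by
            rw [Finset.mul_sum]
            exact Finset.sum_congr rfl fun i _ => by rw [pow_add]; ring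
        _ ≤ 2 * (1/2 : ℝ) ^ N * 2 := by
            have hp2 : (0:ℝ) ≤ 2 * (1/2 : ℝ) ^ N := by positivity
            exact mul_le_mul_of_nonneg_left hgeo hp2
        _ = 4 * (1/2 : ℝ) ^ N := by ring
    rw [key]
    calc ‖(∑ i ∈ c.support, c i • (w (k (N + i)) - J (y' i))) + J (b - a)‖
        ≤ ‖∑ i ∈ c.support, c i • (w (k (N + i)) - J (y' i))‖ + ‖J (b - a)‖ :=
          norm_add_le _ _
      _ ≤ 4 * (1/2 : ℝ) ^ N + ‖b - a‖ := by
          rw [J.norm_map]; linarith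
      _ < ε := by linarith
end
end

section
/- Let 1 < p < ∞, let Z be an infinite-dimensional complex Banach space, and let J : ℓ_p → Z be a linear isometric embedding. Assume that (a) every infinite-dimensional closed subspace of Z contains a sequence equivalent to the unit vector basis of ℓ_p; (b) Z satisfies the Principle of Small Perturbations with respect to J; and (c) for every 0 < δ < 1/2 the space ℓ_p admits an inevitable biorthogonal system with constant δ. Then Z is arbitrarily distortable. -/
open scoped ENNReal

noncomputable section

/-!
Given `λ > 1`, take an inevitable biorthogonal system `(Aⱼ, Bⱼ)` of `ℓ_p` with a small constant
`δ`, and let `φ(z)` be the supremum of `|g z|` over the functionals `g` of norm `≤ 1` on `Z` whose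
restriction along `J` lies in `B₀` (Hahn–Banach supplies enough of them). The new norm is
`‖z‖ + 2λ φ(z)`. In an infinite-dimensional closed subspace `Y`, the P.S.P. turns a copy of the
`ℓ_p` basis in `Y` into a small perturbation of `J` applied to disjointly supported unit blocks.
The closed span of a tail of these blocks is infinite-dimensional, hence comes close to `A₀` and
to `A₁`; disjointness bounds the coefficients, so the approximants can be moved back into `Y`.
Near `J A₀` the functional `φ` is about `1`, near `J A₁` it is about `0`, and this gap makes the
two norms differ by the factor `λ` on `Y`.
-/

open Function Metric

theorem LinearIsometry.exists_extension_norm_le {𝕜 E F : Type*} [RCLike 𝕜]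
    [NormedAddCommGroup E] [NormedSpace 𝕜 E] [NormedAddCommGroup F] [NormedSpace 𝕜 F]
    (J : E →ₗᵢ[𝕜] F) (f : StrongDual 𝕜 E) :
    ∃ g : StrongDual 𝕜 F, ‖g‖ ≤ ‖f‖ ∧ ∀ x, g (J x) = f x := by
  let e := J.equivRange
  let i := e.symm.toLinearIsometry
  obtain ⟨g, hg, hgf⟩ := exists_extension_norm_eq _ (f.comp i.toContinuousLinearMap)
  refine ⟨g, ?_, fun x => by simpa [e, i] using hg (e x)⟩
  calc ‖g‖ = ‖f.comp i.toContinuousLinearMap‖ := hgf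
    _ ≤ ‖f‖ * ‖i.toContinuousLinearMap‖ := ContinuousLinearMap.opNorm_comp_le _ _
    _ ≤ ‖f‖ := mul_le_of_le_one_right (norm_nonneg f) i.norm_toContinuousLinearMap_le

theorem pairwise_disjoint_support_of_successive {α M : Type*} [LinearOrder α] [Zero M]
    (f : ℕ → α → M) (hf : ∀ j, f j ≠ 0) (hsucc : ∀ j m n, f j m ≠ 0 → f (j + 1) n ≠ 0 → m < n) :
    Pairwise (Disjoint on fun j => support (f j)) := by
  have hlt : ∀ i j, i < j → ∀ m n, f i m ≠ 0 → f j n ≠ 0 → m < n := by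
    intro i j hij
    induction j, hij using Nat.le_induction with
    | base => exact hsucc i
    | succ j _ ih =>
      obtain ⟨l, hl⟩ := Function.ne_iff.1 (hf j)
      exact fun m n hm hn => (ih m l hm hl).trans (hsucc j l n hl hn)
  intro i j hij
  refine Set.disjoint_left.2 fun t hi hj => ?_
  rcases hij.lt_or_gt with h | h
  · exact lt_irrefl t (hlt i j h t t hi hj)
  · exact lt_irrefl t (hlt j i h t t hj hi)

namespace lp

variable {ι α 𝕜 F : Type*} [NormedField 𝕜] [NormedAddCommGroup F] [NormedSpace 𝕜 F]
  {p : ℝ≥0∞} [Fact (1 ≤ p)]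

theorem norm_smul_le_norm_sum_smul_of_pairwise_disjoint {v : ι → lp (fun _ : α => F) p}
    (hv : Pairwise (Disjoint on fun i => support (v i))) (c : ι → 𝕜) {s : Finset ι} {j : ι}
    (hj : j ∈ s) : ‖c j • v j‖ ≤ ‖∑ i ∈ s, c i • v i‖ := by
  refine lp.norm_mono (zero_lt_one.trans_le Fact.out).ne' fun t => ?_
  by_cases ht : t ∈ support (v j)
  · rw [lp.coeFn_sum, Finset.sum_apply, Finset.sum_eq_single_of_mem j hj fun i _ hij => by
      simp [notMem_support.1 (Set.disjoint_left.1 (hv hij.symm) ht)]]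
  · simp [notMem_support.1 ht]

theorem linearIndependent_of_pairwise_disjoint {v : ι → lp (fun _ : α => F) p}
    (hv0 : ∀ i, v i ≠ 0) (hv : Pairwise (Disjoint on fun i => support (v i))) :
    LinearIndependent 𝕜 v := by
  refine linearIndependent_iff'.2 fun s c hsum j hj => ?_
  have := norm_smul_le_norm_sum_smul_of_pairwise_disjoint hv c hj
  rw [hsum, norm_zero, norm_le_zero_iff, smul_eq_zero] at this
  exact this.resolve_right (hv0 j)

end lp

theorem LinearIndependent.not_finiteDimensional_topologicalClosure_span {𝕜 E ι : Type*}
    [NontriviallyNormedField 𝕜] [NormedAddCommGroup E] [NormedSpace 𝕜 E] [Infinite ι]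
    {v : ι → E} (hv : LinearIndependent 𝕜 v) :
    ¬ FiniteDimensional 𝕜 (Submodule.span 𝕜 (Set.range v)).topologicalClosure := by
  intro hfin
  have := Submodule.finiteDimensional_of_le (Submodule.le_topologicalClosure
    (Submodule.span 𝕜 (Set.range v)))
  exact Module.Finite.not_linearIndependent_of_infinite _ (linearIndependent_span hv)

theorem Inevitable.exists_mem_near {X : Type*} [NormedAddCommGroup X] [NormedSpace ℂ X]
    {A : Set X} (hA : Inevitable A) {S : Submodule ℂ X}
    (hS : ¬ FiniteDimensional ℂ S.topologicalClosure) {ε : ℝ} (hε : 0 < ε) :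
    ∃ h ∈ S, ∃ a ∈ A, ‖h - a‖ < ε := by
  obtain ⟨h, hh, a, ha, hha⟩ :=
    hA _ S.isClosed_topologicalClosure hS (ε / 2) (half_pos hε)
  rw [← SetLike.mem_coe, Submodule.topologicalClosure_coe] at hh
  obtain ⟨h', hh', hhh'⟩ := Metric.mem_closure_iff.1 hh (ε / 2) (half_pos hε)
  refine ⟨h', hh', a, ha, ?_⟩
  calc ‖h' - a‖ ≤ ‖h' - h‖ + ‖h - a‖ := norm_sub_le_norm_sub_add_norm_sub _ _ _
    _ < ε / 2 + ε / 2 := by rw [← dist_eq_norm, dist_comm]; gcongr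
    _ = ε := add_halves ε

theorem norm_sum_smul_sub_sum_smul_le {𝕜 X : Type*} [NormedField 𝕜] [SeminormedAddCommGroup X]
    [NormedSpace 𝕜 X] {x y : ℕ → X} {η K : ℝ} (hxy : ∀ i, ‖x i - y i‖ ≤ η * (1 / 2) ^ i)
    (hK : 0 ≤ K) {s : Finset ℕ} {c : ℕ → 𝕜} (hc : ∀ i ∈ s, ‖c i‖ ≤ K) :
    ‖∑ i ∈ s, c i • x i - ∑ i ∈ s, c i • y i‖ ≤ 2 * K * η := by
  have hη : 0 ≤ η := by simpa using (norm_nonneg _).trans (hxy 0)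
  calc ‖∑ i ∈ s, c i • x i - ∑ i ∈ s, c i • y i‖
      = ‖∑ i ∈ s, c i • (x i - y i)‖ := by simp only [smul_sub, Finset.sum_sub_distrib]
    _ ≤ ∑ i ∈ s, K * (η * (1 / 2) ^ i) := by
        refine norm_sum_le_of_le s fun i hi => ?_
        rw [norm_smul]
        exact mul_le_mul (hc i hi) (hxy i) (norm_nonneg _) hK
    _ = K * η * ∑ i ∈ s, (1 / 2 : ℝ) ^ i := by rw [Finset.mul_sum]; ring_nf
    _ ≤ K * η * 2 := by
        gcongr
        exact (summable_geometric_two.sum_le_tsum s fun i _ => by positivity).trans_eq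
          tsum_geometric_two
    _ = 2 * K * η := by ring

section Inevitable

variable {α F : Type*} [NormedAddCommGroup F] [NormedSpace ℂ F] {p : ℝ≥0∞} [Fact (1 ≤ p)]
  {A : Set (lp (fun _ : α => F) p)}

theorem Inevitable.exists_sum_smul_near (hA : Inevitable A) (hA1 : A ⊆ closedBall 0 1)
    {v : ℕ → lp (fun _ : α => F) p} (hv1 : ∀ i, ‖v i‖ = 1)
    (hv : Pairwise (Disjoint on fun i => support (v i))) {ε : ℝ} (hε : 0 < ε) :
    ∃ (s : Finset ℕ) (c : ℕ → ℂ), (∀ i ∈ s, ‖c i‖ ≤ 1 + ε) ∧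
      ∃ a ∈ A, ‖∑ i ∈ s, c i • v i - a‖ < ε := by
  have hv0 : ∀ i, v i ≠ 0 := fun i h => by simpa [h] using hv1 i
  have hli : LinearIndependent ℂ v := lp.linearIndependent_of_pairwise_disjoint hv0 hv
  obtain ⟨h, hh, a, ha, hha⟩ :=
    hA.exists_mem_near hli.not_finiteDimensional_topologicalClosure_span hε
  obtain ⟨c, rfl⟩ := Finsupp.mem_span_range_iff_exists_finsupp.1 hh
  rw [Finsupp.sum] at hha
  refine ⟨c.support, c, fun i hi => ?_, a, ha, hha⟩
  calc ‖c i‖ = ‖c i • v i‖ := by rw [norm_smul, hv1, mul_one]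
    _ ≤ ‖∑ i ∈ c.support, c i • v i‖ :=
        lp.norm_smul_le_norm_sum_smul_of_pairwise_disjoint hv c hi
    _ ≤ ‖a‖ + ‖∑ i ∈ c.support, c i • v i - a‖ := norm_le_norm_add_norm_sub' _ a
    _ ≤ 1 + ε := by linarith [mem_closedBall_zero_iff.1 (hA1 ha)]

theorem Inevitable.exists_mem_near_of_perturbation {Z : Type*} [NormedAddCommGroup Z]
    [NormedSpace ℂ Z] (hA : Inevitable A) (hA1 : A ⊆ closedBall 0 1)
    (J : lp (fun _ : α => F) p →ₗᵢ[ℂ] Z) {Y : Submodule ℂ Z} {z : ℕ → Z} (hzY : ∀ n, z n ∈ Y)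
    {y : ℕ → lp (fun _ : α => F) p} (hy1 : ∀ j, ‖y j‖ = 1)
    (hy : Pairwise (Disjoint on fun j => support (y j)))
    (hzy : ∀ j, ‖z j - J (y j)‖ ≤ (1 / 2) ^ j) {ε : ℝ} (hε : 0 < ε) :
    ∃ x ∈ Y, ∃ a ∈ A, ‖x - J a‖ ≤ ε := by
  obtain ⟨m, hm⟩ : ∃ m : ℕ, (1 / 2 : ℝ) ^ m < ε / (4 + 2 * ε) :=
    exists_pow_lt_of_lt_one (by positivity) (by norm_num)
  obtain ⟨s, c, hc, a, ha, hsa⟩ := hA.exists_sum_smul_near hA1 (v := fun i => y (i + m))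
    (fun i => hy1 _) (hy.comp_of_injective (add_left_injective m)) (half_pos hε)
  refine ⟨∑ i ∈ s, c i • z (i + m), Y.sum_mem fun i _ => Y.smul_mem _ (hzY _), a, ha, ?_⟩
  have hpert := norm_sum_smul_sub_sum_smul_le (x := fun i => z (i + m))
    (y := fun i => J (y (i + m))) (η := (1 / 2) ^ m)
    (fun i => by simpa only [pow_add, mul_comm] using hzy (i + m)) (by positivity) hc
  have hJ : ‖∑ i ∈ s, c i • J (y (i + m)) - J a‖ = ‖∑ i ∈ s, c i • y (i + m) - a‖ := by
    simp only [← map_smul, ← map_sum, ← map_sub, J.norm_map]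
  have hm' : 2 * (1 + ε / 2) * (1 / 2 : ℝ) ^ m ≤ ε / 2 := by
    rw [lt_div_iff₀ (by positivity)] at hm
    nlinarith
  calc ‖∑ i ∈ s, c i • z (i + m) - J a‖
      ≤ ‖∑ i ∈ s, c i • z (i + m) - ∑ i ∈ s, c i • J (y (i + m))‖ +
        ‖∑ i ∈ s, c i • J (y (i + m)) - J a‖ := norm_sub_le_norm_sub_add_norm_sub _ _ _
    _ ≤ ε / 2 + ε / 2 := by rw [hJ]; linarith
    _ = ε := add_halves ε

end Inevitable

section DualSupSeminorm

variable {X : Type*} [NormedAddCommGroup X] [NormedSpace ℂ X]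

theorem norm_apply_le_of_mem_closedBall_one {g : StrongDual ℂ X} (hg : g ∈ closedBall 0 1)
    (x : X) : ‖g x‖ ≤ ‖x‖ :=
  (g.le_of_opNorm_le (mem_closedBall_zero_iff.1 hg) x).trans_eq (one_mul _)

theorem norm_apply_sub_apply_le_of_mem_closedBall_one {g : StrongDual ℂ X}
    (hg : g ∈ closedBall 0 1) (x y : X) : ‖g x - g y‖ ≤ ‖x - y‖ := by
  simpa only [map_sub] using norm_apply_le_of_mem_closedBall_one hg (x - y)

def dualSupSeminorm (S : Set (StrongDual ℂ X)) : Seminorm ℂ X :=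
  ⨆ g : S, (normSeminorm ℂ ℂ).comp (g : X →ₗ[ℂ] ℂ)

variable {S : Set (StrongDual ℂ X)}

theorem bddAbove_range_norm_apply (hS : S ⊆ closedBall 0 1) (x : X) :
    BddAbove (Set.range fun g : S => ‖(g : StrongDual ℂ X) x‖) := by
  refine ⟨‖x‖, ?_⟩
  rintro _ ⟨g, rfl⟩
  exact norm_apply_le_of_mem_closedBall_one (hS g.2) x

theorem dualSupSeminorm_apply (hS : S ⊆ closedBall 0 1) (x : X) :
    dualSupSeminorm S x = ⨆ g : S, ‖(g : StrongDual ℂ X) x‖ :=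
  Seminorm.iSup_apply (Seminorm.bddAbove_range_iff.2 (bddAbove_range_norm_apply hS))

theorem norm_apply_le_dualSupSeminorm (hS : S ⊆ closedBall 0 1) {g : StrongDual ℂ X}
    (hg : g ∈ S) (x : X) : ‖g x‖ ≤ dualSupSeminorm S x := by
  rw [dualSupSeminorm_apply hS]
  exact le_ciSup (f := fun g : S => ‖(g : StrongDual ℂ X) x‖) (bddAbove_range_norm_apply hS x)
    ⟨g, hg⟩

theorem dualSupSeminorm_le (hS : S ⊆ closedBall 0 1) {x : X} {b : ℝ} (hb : 0 ≤ b)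
    (h : ∀ g ∈ S, ‖g x‖ ≤ b) : dualSupSeminorm S x ≤ b := by
  rw [dualSupSeminorm_apply hS]
  exact Real.iSup_le (fun g => h g g.2) hb

theorem dualSupSeminorm_le_norm (hS : S ⊆ closedBall 0 1) (x : X) :
    dualSupSeminorm S x ≤ ‖x‖ :=
  dualSupSeminorm_le hS (norm_nonneg x) fun _ hg => norm_apply_le_of_mem_closedBall_one (hS hg) x

end DualSupSeminorm

section Pullback

variable {E Z : Type*} [NormedAddCommGroup E] [NormedSpace ℂ E] [NormedAddCommGroup Z]
  [NormedSpace ℂ Z] (J : E →ₗᵢ[ℂ] Z) {B : Set (StrongDual ℂ E)} {a : E} {z : Z} {δ : ℝ}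

def LinearIsometry.dualBallPullback (B : Set (StrongDual ℂ E)) : Set (StrongDual ℂ Z) :=
  closedBall 0 1 ∩ (·.comp J.toContinuousLinearMap) ⁻¹' B

theorem LinearIsometry.dualBallPullback_subset (B : Set (StrongDual ℂ E)) :
    J.dualBallPullback B ⊆ closedBall 0 1 :=
  Set.inter_subset_left

theorem le_dualSupSeminorm_pullback {f : StrongDual ℂ E} (hf : f ∈ B) (hf1 : ‖f‖ ≤ 1)
    (hfa : 1 - δ ≤ (f a).re) (hz : ‖z - J a‖ ≤ δ) :
    1 - 2 * δ ≤ dualSupSeminorm (J.dualBallPullback B) z := by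
  obtain ⟨g, hg1, hgJ⟩ := J.exists_extension_norm_le f
  have hg : g ∈ J.dualBallPullback B :=
    ⟨mem_closedBall_zero_iff.2 (hg1.trans hf1), by
      simpa [show g.comp J.toContinuousLinearMap = f from ContinuousLinearMap.ext hgJ] using hf⟩
  calc 1 - 2 * δ ≤ ‖g (J a)‖ - ‖g z - g (J a)‖ := by
        have := norm_apply_sub_apply_le_of_mem_closedBall_one hg.1 z (J a)
        rw [hgJ] at this ⊢
        linarith [Complex.re_le_norm (f a)]
    _ ≤ ‖g z‖ := by linarith [norm_sub_norm_le (g (J a)) (g z), norm_sub_rev (g z) (g (J a))]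
    _ ≤ _ := norm_apply_le_dualSupSeminorm (J.dualBallPullback_subset B) hg z

theorem dualSupSeminorm_pullback_le (ha : ∀ f ∈ B, ‖f a‖ ≤ δ) (hz : ‖z - J a‖ ≤ δ) :
    dualSupSeminorm (J.dualBallPullback B) z ≤ 2 * δ := by
  refine dualSupSeminorm_le (J.dualBallPullback_subset B)
    (by linarith [norm_nonneg (z - J a)]) ?_
  rintro g ⟨hg1, hgB⟩
  have hgJa : ‖g (J a)‖ ≤ δ := ha _ hgB
  have := norm_apply_sub_apply_le_of_mem_closedBall_one hg1 z (J a)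
  linarith [norm_le_norm_add_norm_sub' (g z) (g (J a))]

end Pullback

section Distortion

variable {X : Type*} [NormedAddCommGroup X] [NormedSpace ℂ X]

theorem Distortable.of_seminorm (N : Seminorm ℂ X) {C lam : ℝ} (hC : 0 < C)
    (hN : ∀ x, ‖x‖ ≤ N x) (hNC : ∀ x, N x ≤ C * ‖x‖)
    (hY : ∀ Y : Submodule ℂ X, IsClosed (Y : Set X) → ¬ FiniteDimensional ℂ Y →
      ∃ x ∈ Y, ∃ y ∈ Y, x ≠ 0 ∧ y ≠ 0 ∧ lam * (N y / ‖y‖) ≤ N x / ‖x‖) :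
    Distortable X lam := by
  refine ⟨N, ⟨apply_nonneg N, fun x hx => norm_le_zero_iff.1 ((hN x).trans hx.le),
    map_smul_eq_mul N, map_add_le_add N⟩, ⟨1, one_pos, C, hC, fun x => ⟨by simpa using hN x,
    hNC x⟩⟩, fun Y hYc hYfin => ?_⟩
  have hnormalize : ∀ u : X, u ≠ 0 →
      ‖((‖u‖⁻¹ : ℝ) : ℂ) • u‖ = 1 ∧ N (((‖u‖⁻¹ : ℝ) : ℂ) • u) = N u / ‖u‖ := by
    intro u hu
    have hu' : 0 < ‖u‖ := norm_pos_iff.2 hu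
    simp only [norm_smul, map_smul_eq_mul, Complex.norm_real, norm_inv, norm_norm]
    exact ⟨inv_mul_cancel₀ hu'.ne', inv_mul_eq_div _ _⟩
  obtain ⟨x, hx, y, hy, hx0, hy0, hxy⟩ := hY Y hYc hYfin
  obtain ⟨hx1, hNx⟩ := hnormalize x hx0
  obtain ⟨hy1, hNy⟩ := hnormalize y hy0
  have hbdd : BddAbove {r : ℝ | ∃ x ∈ Y, ∃ y ∈ Y, ‖x‖ = 1 ∧ ‖y‖ = 1 ∧ r = N x / N y} := by
    refine ⟨C, ?_⟩
    rintro _ ⟨x, -, y, -, hx, hy, rfl⟩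
    have hNy : 1 ≤ N y := hy ▸ hN y
    rw [div_le_iff₀ (one_pos.trans_le hNy)]
    nlinarith [hNC x]
  refine (le_csSup hbdd ⟨_, Y.smul_mem _ hx, _, Y.smul_mem _ hy, hx1, hy1, rfl⟩).trans' ?_
  rw [hNx, hNy, le_div_iff₀ (div_pos ((norm_pos_iff.2 hy0).trans_le (hN y))
    (norm_pos_iff.2 hy0))]
  exact hxy

theorem distortable_of_seminorm_gap {lam : ℝ} (hlam : 0 < lam) (φ : Seminorm ℂ X)
    (hφ : ∀ x, φ x ≤ ‖x‖)
    (hY : ∀ Y : Submodule ℂ X, IsClosed (Y : Set X) → ¬ FiniteDimensional ℂ Y →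
      ∃ x ∈ Y, ∃ y ∈ Y, x ≠ 0 ∧ y ≠ 0 ∧ ‖x‖ ≤ 2 * φ x ∧ 2 * lam ^ 2 * φ y ≤ ‖y‖) :
    Distortable X lam := by
  set N : Seminorm ℂ X := normSeminorm ℂ X + (2 * lam).toNNReal • φ
  have hN : ∀ x, N x = ‖x‖ + 2 * lam * φ x := fun x => by
    simp [N, NNReal.smul_def, Real.coe_toNNReal _ (by positivity : 0 ≤ 2 * lam)]
  refine Distortable.of_seminorm N (C := 1 + 2 * lam) (by positivity)
    (fun x => by nlinarith [hN x, apply_nonneg φ x]) (fun x => by nlinarith [hN x, hφ x])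
    fun Y hYc hYfin => ?_
  obtain ⟨x, hx, y, hy, hx0, hy0, hφx, hφy⟩ := hY Y hYc hYfin
  have hx' := norm_pos_iff.2 hx0
  have hy' := norm_pos_iff.2 hy0
  refine ⟨x, hx, y, hy, hx0, hy0, ?_⟩
  -- `N x / ‖x‖ ≥ 1 + λ` and `N y / ‖y‖ ≤ 1 + 1 / λ`
  rw [← mul_div_assoc, div_le_div_iff₀ hy' hx', hN, hN]
  nlinarith [mul_le_mul_of_nonneg_left hφx (by positivity : 0 ≤ lam * ‖y‖),
    mul_le_mul_of_nonneg_left hφy hx'.le]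

end Distortion

theorem arbitrarilyDistortable_of_psp_general
    (p : ℝ≥0∞) [Fact (1 ≤ p)]
    (Z : Type*) [NormedAddCommGroup Z] [NormedSpace ℂ Z]
    (J : LpSeq p →ₗᵢ[ℂ] Z)
    (ha : ∀ W : Submodule ℂ Z, IsClosed (W : Set Z) → ¬ FiniteDimensional ℂ W →
      ∃ w : ℕ → Z, (∀ n, w n ∈ W) ∧ ∃ C : ℝ, IsEquivUnitVecBasisLp p C w)
    (hb : SatisfiesPSP p J)
    (hc : ∀ δ : ℝ, 0 < δ → δ < 1 / 2 → InevitableBiorthSystem (LpSeq p) δ) :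
    ArbitrarilyDistortable Z := by
  intro lam hlam
  -- small enough for `‖z₁‖ ≤ 2 φ z₁` and `2 λ² φ z₂ ≤ ‖z₂‖` below
  obtain ⟨δ, hδ, hδ8, hδlam⟩ : ∃ δ : ℝ, 0 < δ ∧ δ < 1 / 8 ∧ 4 * lam ^ 2 * δ = 1 / 2 := by
    refine ⟨1 / (8 * lam ^ 2), by positivity, ?_, by field_simp; ring⟩
    rw [div_lt_div_iff₀ (by positivity) (by norm_num)]
    nlinarith
  obtain ⟨A, B, hAs, hBb, hAinev, hAB, hbi⟩ := hc δ hδ (by linarith)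
  have hA1 : ∀ j, A j ⊆ closedBall 0 1 := fun j => (hAs j).trans sphere_subset_closedBall
  refine distortable_of_seminorm_gap (by positivity) _
    (dualSupSeminorm_le_norm (J.dualBallPullback_subset (B 0)))
    fun Y hYc hYfin => ?_
  obtain ⟨w, hwY, hw⟩ := ha Y hYc hYfin
  obtain ⟨k, y, -, hy0, hsucc, hy1, hwy⟩ := hb w hw
  have hy : Pairwise (Disjoint on fun j => support (y j)) :=
    pairwise_disjoint_support_of_successive _ (fun j h => hy0 j (lp.ext h)) hsucc
  obtain ⟨z₁, hz₁, a₁, ha₁, hza₁⟩ :=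
    (hAinev 0).exists_mem_near_of_perturbation (hA1 0) J (fun n => hwY (k n)) hy1 hy hwy hδ
  obtain ⟨z₂, hz₂, a₂, ha₂, hza₂⟩ :=
    (hAinev 1).exists_mem_near_of_perturbation (hA1 1) J (fun n => hwY (k n)) hy1 hy hwy hδ
  have hJa : ∀ j, ∀ a ∈ A j, ‖J a‖ = 1 := fun j a ha => by simpa using hAs j ha
  obtain ⟨f, hf, hfa⟩ := hAB 0 a₁ ha₁
  have hφ₁ := le_dualSupSeminorm_pullback J hf (mem_closedBall_zero_iff.1 (hBb 0 hf)) hfa hza₁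
  have hφ₂ := dualSupSeminorm_pullback_le J (hbi 1 0 one_ne_zero a₂ ha₂) hza₂
  have hnz₁ := norm_le_norm_add_norm_sub' z₁ (J a₁)
  have hnz₂ := norm_sub_norm_le (J a₂) z₂
  rw [norm_sub_rev] at hnz₂
  refine ⟨z₁, hz₁, z₂, hz₂, fun h => ?_, norm_pos_iff.1 (by linarith [hJa 1 a₂ ha₂]),
    by linarith [hJa 0 a₁ ha₁], by nlinarith [hJa 1 a₂ ha₂]⟩
  rw [h, map_zero] at hφ₁
  linarith

/-- If `Z` is an infinite-dimensional complex Banach space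
containing `ℓ_p` isometrically via `J`, every infinite-dimensional closed
subspace of `Z` contains a sequence equivalent to the unit vector basis of
`ℓ_p`, `Z` satisfies the P.S.P. with respect to `J`, and `ℓ_p` admits an
inevitable biorthogonal system with constant `δ` for every `0 < δ < 1/2`,
then `Z` is arbitrarily distortable. -/
theorem arbitrarilyDistortable_of_psp
    (p : ℝ≥0∞) [Fact (1 ≤ p)] (hp : 1 < p) (hp' : p ≠ ∞)
    (Z : Type*) [NormedAddCommGroup Z] [NormedSpace ℂ Z] [CompleteSpace Z]
    (hZ : ¬ FiniteDimensional ℂ Z)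
    (J : LpSeq p →ₗᵢ[ℂ] Z)
    (ha : ∀ W : Submodule ℂ Z, IsClosed (W : Set Z) → ¬ FiniteDimensional ℂ W →
      ∃ w : ℕ → Z, (∀ n, w n ∈ W) ∧ ∃ C : ℝ, IsEquivUnitVecBasisLp p C w)
    (hb : SatisfiesPSP p J)
    (hc : ∀ δ : ℝ, 0 < δ → δ < 1 / 2 → InevitableBiorthSystem (LpSeq p) δ) :
    ArbitrarilyDistortable Z :=
  arbitrarilyDistortable_of_psp_general p Z J ha hb hc
end
end
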